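/- arXiv:2010.14178 — 2 statements merged into one kernel-verified Lean document; each statement's English description precedes it below -/
import Mathlib

section
/- Let μ' and ν' be probability measures on ℝ^d, let π be a coupling of μ' and ν', and let δ > 0. Let a, b : ℝ^d → ℝ^d be measurable maps and g : ℝ^d → [0, ∞) be a measurable function with ∫g dμ' < ∞, ∫g dν' < ∞, ∫‖a−b‖ dν' < ∞, such that ‖a(x) − a(y)‖ ≤ (g(x) + g(y))·‖x − y‖ for π-almost every (x, y). Then ∫ ⟨x − y, a(x) − b(y)⟩ / (‖x − y‖² + δ²) dπ(x,y) ≤ ∫g dμ' + ∫g dν' + (1/δ)·∫‖a − b‖ dν'. -/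
open MeasureTheory

noncomputable section

/-- `ℝ^d` as a Euclidean space. -/
abbrev Euc (d : ℕ) : Type := EuclideanSpace ℝ (Fin d)

/-- `P` is a coupling of `μ` and `ν`: its marginals are `μ` and `ν`. -/
def IsCoupling {d : ℕ} (P : Measure (Euc d × Euc d)) (μ ν : Measure (Euc d)) : Prop :=
  P.map Prod.fst = μ ∧ P.map Prod.snd = ν

/-!
Pointwise, Cauchy–Schwarz and the triangle inequality through `a y` give
`|⟨x - y, a x - b y⟩| ≤ (g x + g y) t² + t ‖a y - b y‖` with `t = ‖x - y‖`, and dividing by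
`t² + δ²` leaves at most `g x + g y + ‖a y - b y‖ / δ` because `t δ ≤ t² + δ²`.
Integrating this bound against the coupling only sees its marginals.
-/

section Marginals

variable {α β E : Type*} [MeasurableSpace α] [MeasurableSpace β]
  [NormedAddCommGroup E] {P : Measure (α × β)}

theorem integrable_comp_fst_of_map_fst_eq {μ : Measure α} (hP : P.map Prod.fst = μ)
    {f : α → E} (hf : Integrable f μ) : Integrable (fun p => f p.1) P :=
  (hP ▸ hf).comp_measurable measurable_fst

theorem integrable_comp_snd_of_map_snd_eq {ν : Measure β} (hP : P.map Prod.snd = ν)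
    {f : β → E} (hf : Integrable f ν) : Integrable (fun p => f p.2) P :=
  (hP ▸ hf).comp_measurable measurable_snd

theorem integral_comp_fst_of_map_fst_eq [NormedSpace ℝ E] {μ : Measure α}
    (hP : P.map Prod.fst = μ) {f : α → E} (hf : AEStronglyMeasurable f μ) :
    ∫ p, f p.1 ∂P = ∫ x, f x ∂μ := by
  subst hP
  exact (integral_map measurable_fst.aemeasurable hf).symm

theorem integral_comp_snd_of_map_snd_eq [NormedSpace ℝ E] {ν : Measure β}
    (hP : P.map Prod.snd = ν) {f : β → E} (hf : AEStronglyMeasurable f ν) :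
    ∫ p, f p.2 ∂P = ∫ x, f x ∂ν := by
  subst hP
  exact (integral_map measurable_snd.aemeasurable hf).symm

end Marginals

theorem mul_sq_div_sq_add_sq_le {G t δ : ℝ} (hG : 0 ≤ G) (hδ : 0 < δ) :
    G * t ^ 2 / (t ^ 2 + δ ^ 2) ≤ G := by
  rw [div_le_iff₀ (by positivity)]
  nlinarith [sq_nonneg δ]

theorem mul_div_sq_add_sq_le {c t δ : ℝ} (hc : 0 ≤ c) (hδ : 0 < δ) :
    t * c / (t ^ 2 + δ ^ 2) ≤ 1 / δ * c := by
  have hmul : t * δ ≤ t ^ 2 + δ ^ 2 := by nlinarith [sq_nonneg (t - δ), sq_nonneg t]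
  rw [div_le_iff₀ (by positivity), one_div_mul_eq_div, div_mul_eq_mul_div, le_div_iff₀ hδ]
  nlinarith

theorem abs_inner_div_norm_sq_add_sq_le {E : Type*} [NormedAddCommGroup E]
    [InnerProductSpace ℝ E] {x y u v w : E} {G δ : ℝ} (hG : 0 ≤ G) (hδ : 0 < δ)
    (huv : ‖u - v‖ ≤ G * ‖x - y‖) :
    |inner ℝ (x - y) (u - w) / (‖x - y‖ ^ 2 + δ ^ 2)| ≤ G + 1 / δ * ‖v - w‖ := by
  set t := ‖x - y‖
  have hden : 0 < t ^ 2 + δ ^ 2 := by positivity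
  have hinner : |inner ℝ (x - y) (u - w)| ≤ G * t ^ 2 + t * ‖v - w‖ :=
    calc |inner ℝ (x - y) (u - w)| ≤ t * ‖u - w‖ := abs_real_inner_le_norm _ _
      _ ≤ t * (‖u - v‖ + ‖v - w‖) := by gcongr; exact norm_sub_le_norm_sub_add_norm_sub _ _ _
      _ ≤ t * (G * t + ‖v - w‖) := by gcongr
      _ = G * t ^ 2 + t * ‖v - w‖ := by ring
  calc |inner ℝ (x - y) (u - w) / (t ^ 2 + δ ^ 2)|
      = |inner ℝ (x - y) (u - w)| / (t ^ 2 + δ ^ 2) := by rw [abs_div, abs_of_pos hden]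
    _ ≤ (G * t ^ 2 + t * ‖v - w‖) / (t ^ 2 + δ ^ 2) := by gcongr
    _ = G * t ^ 2 / (t ^ 2 + δ ^ 2) + t * ‖v - w‖ / (t ^ 2 + δ ^ 2) := add_div _ _ _
    _ ≤ G + 1 / δ * ‖v - w‖ :=
      add_le_add (mul_sq_div_sq_add_sq_le hG hδ) (mul_div_sq_add_sq_le (norm_nonneg _) hδ)

theorem drift_term_bound_general {d : ℕ} (μ' ν' : Measure (Euc d))
    (P : Measure (Euc d × Euc d)) (hP : IsCoupling P μ' ν')
    (δ : ℝ) (hδ : 0 < δ)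
    (a b : Euc d → Euc d) (ha : Measurable a) (hb : Measurable b)
    (g : Euc d → ℝ) (hg0 : ∀ x, 0 ≤ g x)
    (hgμ : Integrable g μ') (hgν : Integrable g ν')
    (hab : Integrable (fun x => ‖a x - b x‖) ν')
    (hLip : ∀ᵐ p ∂P, ‖a p.1 - a p.2‖ ≤ (g p.1 + g p.2) * ‖p.1 - p.2‖) :
    (∫ p : Euc d × Euc d,
        (inner ℝ (p.1 - p.2) (a p.1 - b p.2) : ℝ) / (‖p.1 - p.2‖ ^ 2 + δ ^ 2) ∂P) ≤
      (∫ x, g x ∂μ') + (∫ x, g x ∂ν') + (1 / δ) * ∫ x, ‖a x - b x‖ ∂ν' := by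
  have hg₁ := integrable_comp_fst_of_map_fst_eq hP.1 hgμ
  have hg₂ := integrable_comp_snd_of_map_snd_eq hP.2 hgν
  have hab₂ := integrable_comp_snd_of_map_snd_eq hP.2 hab
  have hg₁₂ : Integrable (fun p => g p.1 + g p.2) P := hg₁.add hg₂
  have hbound_int := hg₁₂.add (hab₂.const_mul (1 / δ))
  have hbound : ∀ᵐ p ∂P, ‖(inner ℝ (p.1 - p.2) (a p.1 - b p.2) : ℝ) /
      (‖p.1 - p.2‖ ^ 2 + δ ^ 2)‖ ≤ g p.1 + g p.2 + 1 / δ * ‖a p.2 - b p.2‖ :=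
    hLip.mono fun p hp =>
      abs_inner_div_norm_sq_add_sq_le (add_nonneg (hg0 _) (hg0 _)) hδ hp
  have hint := hbound_int.mono' (by fun_prop : Measurable _).aestronglyMeasurable hbound
  calc _ ≤ ∫ p, g p.1 + g p.2 + 1 / δ * ‖a p.2 - b p.2‖ ∂P :=
        integral_mono_ae hint hbound_int (hbound.mono fun p hp => (le_abs_self _).trans hp)
    _ = _ := by
      rw [integral_add hg₁₂ (hab₂.const_mul _), integral_add hg₁ hg₂,
        integral_const_mul, integral_comp_fst_of_map_fst_eq hP.1 hgμ.1,
        integral_comp_snd_of_map_snd_eq hP.2 hgν.1,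
        integral_comp_snd_of_map_snd_eq hP.2 hab.1]

theorem drift_term_bound {d : ℕ} (μ' ν' : Measure (Euc d))
    [IsProbabilityMeasure μ'] [IsProbabilityMeasure ν']
    (P : Measure (Euc d × Euc d)) (hP : IsCoupling P μ' ν') [IsProbabilityMeasure P]
    (δ : ℝ) (hδ : 0 < δ)
    (a b : Euc d → Euc d) (ha : Measurable a) (hb : Measurable b)
    (g : Euc d → ℝ) (hg : Measurable g) (hg0 : ∀ x, 0 ≤ g x)
    (hgμ : Integrable g μ') (hgν : Integrable g ν')
    (hab : Integrable (fun x => ‖a x - b x‖) ν')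
    (hLip : ∀ᵐ p ∂P, ‖a p.1 - a p.2‖ ≤ (g p.1 + g p.2) * ‖p.1 - p.2‖) :
    (∫ p : Euc d × Euc d,
        (inner ℝ (p.1 - p.2) (a p.1 - b p.2) : ℝ) / (‖p.1 - p.2‖ ^ 2 + δ ^ 2) ∂P) ≤
      (∫ x, g x ∂μ') + (∫ x, g x ∂ν') + (1 / δ) * ∫ x, ‖a x - b x‖ ∂ν' :=
  drift_term_bound_general μ' ν' P hP δ hδ a b ha hb g hg0 hgμ hgν hab hLip

end
end

section
/- Let μ' and ν' be probability measures on ℝ^d, let π be a coupling of μ' and ν', and let δ > 0. Let S, T : ℝ^d → M_d(ℝ) be measurable matrix-valued maps and g : ℝ^d → [0, ∞) a measurable function such that ‖S(x) − S(y)‖_{HS} ≤ (g(x) + g(y))·‖x − y‖ for π-almost every (x, y). Then ∫ ‖S(x) − T(y)‖²_{HS} / (‖x − y‖² + δ²) dπ(x,y) ≤ 4·∫g² dμ' + 4·∫g² dν' + (2/δ²)·∫‖S − T‖²_{HS} dν'. -/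
open MeasureTheory

noncomputable section

/-- The Hilbert–Schmidt (Frobenius) norm of a `d × d` real matrix. -/
def HSnorm {d : ℕ} (A : Matrix (Fin d) (Fin d) ℝ) : ℝ :=
  Real.sqrt (∑ i, ∑ j, (A i j) ^ 2)

/-! Pointwise, the triangle inequality through `S y` and the Lipschitz bound give
`‖S x - T y‖² ≤ 2 (g x + g y)² ‖x - y‖² + 2 ‖S y - T y‖²`, so dividing by `‖x - y‖² + δ²`
dominates the integrand by `4 g(x)² + 4 g(y)² + (2/δ²) ‖S y - T y‖²`, whose integral against
the coupling splits into integrals against its marginals. -/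

section Frobenius

attribute [local instance] Matrix.frobeniusNormedAddCommGroup

theorem HSnorm_eq_norm {d : ℕ} (A : Matrix (Fin d) (Fin d) ℝ) : HSnorm A = ‖A‖ := by
  simp [HSnorm, Matrix.frobenius_norm_def, Real.sqrt_eq_rpow, Real.norm_eq_abs, sq_abs]

theorem HSnorm_nonneg {d : ℕ} (A : Matrix (Fin d) (Fin d) ℝ) : 0 ≤ HSnorm A :=
  HSnorm_eq_norm A ▸ norm_nonneg A

theorem HSnorm_sub_le_HSnorm_sub_add_HSnorm_sub {d : ℕ} (A B C : Matrix (Fin d) (Fin d) ℝ) :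
    HSnorm (A - C) ≤ HSnorm (A - B) + HSnorm (B - C) := by
  simpa only [HSnorm_eq_norm] using norm_sub_le_norm_sub_add_norm_sub A B C

end Frobenius

namespace IsCoupling

variable {d : ℕ} {P : Measure (Euc d × Euc d)} {μ ν : Measure (Euc d)}
  {E : Type*} [NormedAddCommGroup E] {f : Euc d → E}

theorem integrable_comp_fst (hP : IsCoupling P μ ν) (hf : Integrable f μ) :
    Integrable (fun p => f p.1) P := by
  rw [← hP.1] at hf
  exact hf.comp_measurable measurable_fst

theorem integrable_comp_snd (hP : IsCoupling P μ ν) (hf : Integrable f ν) :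
    Integrable (fun p => f p.2) P := by
  rw [← hP.2] at hf
  exact hf.comp_measurable measurable_snd

theorem integral_comp_fst [NormedSpace ℝ E] (hP : IsCoupling P μ ν)
    (hf : AEStronglyMeasurable f μ) : ∫ p, f p.1 ∂P = ∫ x, f x ∂μ := by
  rw [← hP.1] at hf ⊢
  exact (integral_map measurable_fst.aemeasurable hf).symm

theorem integral_comp_snd [NormedSpace ℝ E] (hP : IsCoupling P μ ν)
    (hf : AEStronglyMeasurable f ν) : ∫ p, f p.2 ∂P = ∫ x, f x ∂ν := by
  rw [← hP.2] at hf ⊢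
  exact (integral_map measurable_snd.aemeasurable hf).symm

end IsCoupling

theorem sq_div_sq_add_sq_le {a b c n G δ : ℝ} (hδ : 0 < δ) (ha : 0 ≤ a) (hb : 0 ≤ b)
    (habc : a ≤ b + c) (hbn : b ≤ G * n) :
    a ^ 2 / (n ^ 2 + δ ^ 2) ≤ 2 * G ^ 2 + 2 / δ ^ 2 * c ^ 2 := by
  have hnδ : 0 < n ^ 2 + δ ^ 2 := by positivity
  have ha2 : a ^ 2 ≤ 2 * G ^ 2 * n ^ 2 + 2 * c ^ 2 := by
    have hb2 : b ^ 2 ≤ (G * n) ^ 2 := pow_le_pow_left₀ hb hbn 2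
    nlinarith [add_sq_le (a := b) (b := c), pow_le_pow_left₀ ha habc 2]
  calc a ^ 2 / (n ^ 2 + δ ^ 2)
      ≤ 2 * G ^ 2 * (n ^ 2 / (n ^ 2 + δ ^ 2)) + 2 * c ^ 2 / (n ^ 2 + δ ^ 2) := by
        rw [mul_div_assoc', ← add_div]
        gcongr
    _ ≤ 2 * G ^ 2 * 1 + 2 * c ^ 2 / δ ^ 2 := by
        gcongr
        · exact div_le_one_of_le₀ (by linarith [sq_nonneg δ]) hnδ.le
        · linarith [sq_nonneg n]
    _ = 2 * G ^ 2 + 2 / δ ^ 2 * c ^ 2 := by ring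

theorem diffusion_term_bound_general {d : ℕ} (μ' ν' : Measure (Euc d))
    (P : Measure (Euc d × Euc d)) (hP : IsCoupling P μ' ν')
    (δ : ℝ) (hδ : 0 < δ)
    (S T : Euc d → Matrix (Fin d) (Fin d) ℝ)
    (g : Euc d → ℝ)
    (hgμ : Integrable (fun x => g x ^ 2) μ') (hgν : Integrable (fun x => g x ^ 2) ν')
    (hST : Integrable (fun x => HSnorm (S x - T x) ^ 2) ν')
    (hLip : ∀ᵐ p ∂P, HSnorm (S p.1 - S p.2) ≤ (g p.1 + g p.2) * ‖p.1 - p.2‖) :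
    (∫ p : Euc d × Euc d,
        HSnorm (S p.1 - T p.2) ^ 2 / (‖p.1 - p.2‖ ^ 2 + δ ^ 2) ∂P) ≤
      4 * (∫ x, g x ^ 2 ∂μ') + 4 * (∫ x, g x ^ 2 ∂ν') +
        (2 / δ ^ 2) * ∫ x, HSnorm (S x - T x) ^ 2 ∂ν' := by
  have hdom : ∀ᵐ p ∂P, HSnorm (S p.1 - T p.2) ^ 2 / (‖p.1 - p.2‖ ^ 2 + δ ^ 2) ≤
      4 * g p.1 ^ 2 + 4 * g p.2 ^ 2 + 2 / δ ^ 2 * HSnorm (S p.2 - T p.2) ^ 2 := by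
    filter_upwards [hLip] with p hp
    have := sq_div_sq_add_sq_le hδ (HSnorm_nonneg _) (HSnorm_nonneg _)
      (HSnorm_sub_le_HSnorm_sub_add_HSnorm_sub (S p.1) (S p.2) (T p.2)) hp
    linarith [add_sq_le (a := g p.1) (b := g p.2)]
  have hgμP := (hP.integrable_comp_fst hgμ).const_mul 4
  have hgνP := (hP.integrable_comp_snd hgν).const_mul 4
  have hSTP := (hP.integrable_comp_snd hST).const_mul (2 / δ ^ 2)
  calc _ ≤ ∫ p, 4 * g p.1 ^ 2 + 4 * g p.2 ^ 2 + 2 / δ ^ 2 * HSnorm (S p.2 - T p.2) ^ 2 ∂P :=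
        integral_mono_of_nonneg (ae_of_all _ fun p => by positivity)
          ((hgμP.add hgνP).add hSTP) hdom
    _ = _ := by
        rw [integral_add (f := fun p => 4 * g p.1 ^ 2 + 4 * g p.2 ^ 2) (hgμP.add hgνP) hSTP,
          integral_add hgμP hgνP, integral_const_mul, integral_const_mul, integral_const_mul, hP.integral_comp_fst hgμ.1,
          hP.integral_comp_snd hgν.1, hP.integral_comp_snd hST.1]

theorem diffusion_term_bound {d : ℕ} (μ' ν' : Measure (Euc d))
    [IsProbabilityMeasure μ'] [IsProbabilityMeasure ν']
    (P : Measure (Euc d × Euc d)) (hP : IsCoupling P μ' ν') [IsProbabilityMeasure P]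
    (δ : ℝ) (hδ : 0 < δ)
    (S T : Euc d → Matrix (Fin d) (Fin d) ℝ) (hS : ∀ i j, Measurable fun x => S x i j) (hT : ∀ i j, Measurable fun x => T x i j)
    (g : Euc d → ℝ) (hg : Measurable g) (hg0 : ∀ x, 0 ≤ g x)
    (hgμ : Integrable (fun x => g x ^ 2) μ') (hgν : Integrable (fun x => g x ^ 2) ν')
    (hST : Integrable (fun x => HSnorm (S x - T x) ^ 2) ν')
    (hLip : ∀ᵐ p ∂P, HSnorm (S p.1 - S p.2) ≤ (g p.1 + g p.2) * ‖p.1 - p.2‖) :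
    (∫ p : Euc d × Euc d,
        HSnorm (S p.1 - T p.2) ^ 2 / (‖p.1 - p.2‖ ^ 2 + δ ^ 2) ∂P) ≤
      4 * (∫ x, g x ^ 2 ∂μ') + 4 * (∫ x, g x ^ 2 ∂ν') +
        (2 / δ ^ 2) * ∫ x, HSnorm (S x - T x) ^ 2 ∂ν' :=
  diffusion_term_bound_general μ' ν' P hP δ hδ S T g hgμ hgν hST hLip

end
end
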